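/- arXiv:2303.16373 — 2 statements merged into one kernel-verified Lean document; each statement's English description precedes it below -/
import Mathlib

section
/- Let X be a metric space that is strongly locally homogeneous, let Φ be a subset of X, and let x_P ∈ Φ. Define Γ to be the set of all points x ∈ X for which there exists a homeomorphism h : X → X such that h(x_P) = x_P and x ∈ h(Φ). Then Γ is a closed subset of X. -/
/-- A topological space `X` is strongly locally homogeneous if every point has a
neighborhood basis consisting of open sets `U` such that for every `y, z ∈ U` there is
a homeomorphism `h : X → X` with `h y = z` which is the identity outside `U`. -/
def StronglyLocallyHomogeneous (X : Type*) [TopologicalSpace X] : Prop :=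
  ∀ (x : X), ∀ N ∈ nhds x, ∃ U : Set X, IsOpen U ∧ x ∈ U ∧ U ⊆ N ∧
    ∀ y ∈ U, ∀ z ∈ U, ∃ h : X ≃ₜ X, h y = z ∧ ∀ w ∉ U, h w = w

/-- If `X` is a strongly locally homogeneous metric space, `Φ ⊆ X` and `x_P ∈ Φ`, then
the set `Γ` of points `x` for which there is a self-homeomorphism `h` of `X` with
`h x_P = x_P` and `x ∈ h(Φ)` is closed in `X`. -/
theorem gamma_isClosed {X : Type*} [MetricSpace X]
    (hX : StronglyLocallyHomogeneous X) (Φ : Set X) (xP : X) (hxP : xP ∈ Φ) :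
    IsClosed {x : X | ∃ h : X ≃ₜ X, h xP = xP ∧ x ∈ h '' Φ} := by
  rw [← closure_subset_iff_isClosed]
  intro x hx
  by_cases hxp : x = xP
  · exact ⟨Homeomorph.refl X, rfl, xP, hxP, hxp.symm⟩
  · have hN : ({xP}ᶜ : Set X) ∈ nhds x :=
      (isOpen_compl_singleton).mem_nhds (by simpa using hxp)
    obtain ⟨U, hUopen, hxU, hUN, hU⟩ := hX x _ hN
    obtain ⟨y, hyU, h, hh, φ, hφ, hφy⟩ :=
      mem_closure_iff.mp hx U hUopen hxU
    obtain ⟨k, hky, hkid⟩ := hU y hyU x hxU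
    have hxPnotU : xP ∉ U := fun hmem => hUN hmem rfl
    refine ⟨h.trans k, ?_, φ, hφ, ?_⟩
    · simp [Homeomorph.trans_apply, hh, hkid xP hxPnotU]
    · simp [Homeomorph.trans_apply, hφy, hky]
end

section
/- Let L be a real normed vector space, let K ⊆ L be a subset, let W ⊆ L be an open set with K ⊆ W, and let r : W → K be a continuous retraction (r(x) = x for all x ∈ K). Let Z be a compact Hausdorff topological space and F : Z → K a continuous map. Then for every open cover γ of K there exists an open cover ν of Z with the following property: for every closed subset B ⊆ Z, every paracompact Hausdorff space Y, and every continuous surjective ν-map φ : B → Y, there exists a continuous map g : Y → K such that the maps g ∘ φ and F restricted to B are γ-close. -/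
universe u v

/-- Let `K` be a subset of a real normed space `L` which is a retract of an open set
`W ⊇ K`, let `Z` be a compact Hausdorff space and `F : Z → K` continuous. Then for
every open cover `γ` of `K` there is an open cover `ν` of `Z` such that: for every
closed `B ⊆ Z`, every paracompact Hausdorff space `Y`, and every continuous surjective
`ν`-map `φ : B → Y`, there is a continuous `g : Y → K` with `g ∘ φ` `γ`-close to
`F` restricted to `B`. -/
theorem exists_cover_factorization
    {L : Type*} [NormedAddCommGroup L] [NormedSpace ℝ L]
    (K W : Set L) (hWopen : IsOpen W) (hKW : K ⊆ W)
    (r : C(W, K)) (hr : ∀ (x : L) (hx : x ∈ K), (r ⟨x, hKW hx⟩ : L) = x)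
    (Z : Type u) [TopologicalSpace Z] [CompactSpace Z] [T2Space Z]
    (F : C(Z, K))
    (γ : Set (Set K)) (hγopen : ∀ U ∈ γ, IsOpen U) (hγcover : ⋃₀ γ = Set.univ) :
    ∃ ν : Set (Set Z), (∀ U ∈ ν, IsOpen U) ∧ ⋃₀ ν = Set.univ ∧
      ∀ (B : Set Z), IsClosed B →
        ∀ (Y : Type v) [TopologicalSpace Y] [ParacompactSpace Y] [T2Space Y],
          ∀ φ : C(B, Y), Function.Surjective φ →
            -- `φ` is a `ν`-map: some open cover `β` of `Y` pulls back into `ν`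
            (∃ β : Set (Set Y), (∀ V ∈ β, IsOpen V) ∧ ⋃₀ β = Set.univ ∧
              ∀ V ∈ β, ∃ U ∈ ν, (φ ⁻¹' V : Set B) ⊆ {b : B | (b : Z) ∈ U}) →
            ∃ g : C(Y, K), ∀ b : B, ∃ U ∈ γ, g (φ b) ∈ U ∧ F (b : Z) ∈ U := by
  classical
  -- Step 1: for every point `c` of `K`, choose `U ∈ γ` and a radius `ε > 0` such that
  -- the ball of radius `4ε` around `c` lies in `W` and is mapped by `r` into `U`.
  have key : ∀ c : K, ∃ U ∈ γ, ∃ ε > (0:ℝ),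
      ∀ x ∈ Metric.ball (c : L) (4 * ε), ∃ hW : x ∈ W, r ⟨x, hW⟩ ∈ U := by
    intro c
    have hc : (c : K) ∈ ⋃₀ γ := by rw [hγcover]; trivial
    obtain ⟨U, hUγ, hcU⟩ := hc
    obtain ⟨O, hOopen, hOU⟩ := isOpen_induced_iff.1 (hγopen U hUγ)
    -- the preimage of `U` under `r` is open in `W`
    have hq : Continuous fun w : W => (r w : L) :=
      continuous_subtype_val.comp r.continuous
    have hPopen : IsOpen ((fun w : W => (r w : L)) ⁻¹' O) := hOopen.preimage hq
    obtain ⟨O', hO'open, hO'P⟩ := isOpen_induced_iff.1 hPopen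
    have hcO' : (c : L) ∈ O' := by
      have hcW : (c : L) ∈ W := hKW c.2
      have : (⟨(c : L), hcW⟩ : W) ∈ (fun w : W => (r w : L)) ⁻¹' O := by
        show (r ⟨(c : L), hcW⟩ : L) ∈ O
        rw [hr (c : L) c.2]
        have : c ∈ U := hcU
        rw [← hOU] at this
        exact this
      rw [← hO'P] at this
      exact this
    have hcmem : (c : L) ∈ O' ∩ W := ⟨hcO', hKW c.2⟩
    obtain ⟨ε', hε'pos, hball⟩ :=
      Metric.isOpen_iff.1 (hO'open.inter hWopen) (c : L) hcmem
    refine ⟨U, hUγ, ε' / 4, by linarith, ?_⟩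
    intro x hx
    have hx' : x ∈ Metric.ball (c : L) ε' := by
      have : (4 : ℝ) * (ε' / 4) = ε' := by ring
      rwa [this] at hx
    have hxm := hball hx'
    refine ⟨hxm.2, ?_⟩
    have : (⟨x, hxm.2⟩ : W) ∈ (fun w : W => (r w : L)) ⁻¹' O := by
      rw [← hO'P]; exact hxm.1
    rw [← hOU]; exact this
  choose U hUγ ε hεpos hkey using key
  -- Step 2: compactness gives a finite set of centers and a uniform radius `ε₀`.
  have hC : IsCompact (Set.range F) := isCompact_range F.continuous
  have hcov : Set.range F ⊆ ⋃ c : K, Metric.ball c (ε c) := by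
    rintro x ⟨z, rfl⟩
    exact Set.mem_iUnion.2 ⟨F z, Metric.mem_ball_self (hεpos _)⟩
  obtain ⟨t, ht⟩ := hC.elim_finite_subcover (fun c : K => Metric.ball c (ε c))
    (fun c => Metric.isOpen_ball) hcov
  set s : Finset ℝ := insert 1 (t.image ε) with hs
  have hsne : s.Nonempty := ⟨1, Finset.mem_insert_self _ _⟩
  set ε₀ : ℝ := s.min' hsne with hε₀
  have hε₀pos : 0 < ε₀ := by
    have hpos : ∀ x ∈ s, (0:ℝ) < x := by
      intro x hx
      rcases Finset.mem_insert.1 hx with h | h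
      · rw [h]; norm_num
      · obtain ⟨c, _, hc⟩ := Finset.mem_image.1 h
        rw [← hc]; exact hεpos c
    exact hpos _ (s.min'_mem hsne)
  have hε₀le : ∀ c ∈ t, ε₀ ≤ ε c := fun c hc =>
    s.min'_le _ (Finset.mem_insert_of_mem (Finset.mem_image_of_mem ε hc))
  -- The cover `ν`.
  refine ⟨Set.range (fun c : K => ⇑F ⁻¹' Metric.ball c ε₀), ?_, ?_, ?_⟩
  · rintro _ ⟨c, rfl⟩
    exact Metric.isOpen_ball.preimage F.continuous
  · apply Set.eq_univ_of_forall
    intro z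
    exact ⟨⇑F ⁻¹' Metric.ball (F z) ε₀, ⟨F z, rfl⟩,
      Metric.mem_ball_self hε₀pos⟩
  -- Step 3: the factorization.
  rintro B hB Y _ _ _ φ hφ ⟨β, hβo, hβc, hβν⟩
  -- for each element of `β`, a center in `K` controlling `F` on its preimage
  have hctr : ∀ i : {V : Set Y // V ∈ β}, ∃ c : K,
      ∀ b : B, φ b ∈ (i : Set Y) → F (b : Z) ∈ Metric.ball c ε₀ := by
    rintro ⟨V, hV⟩
    obtain ⟨Uν, hUν, hsub⟩ := hβν V hV
    obtain ⟨c, rfl⟩ := hUν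
    exact ⟨c, fun b hb => hsub hb⟩
  choose ctr hctr using hctr
  -- a partition of unity subordinate to `β`
  have hcovY : (Set.univ : Set Y) ⊆ ⋃ i : {V : Set Y // V ∈ β}, (i : Set Y) := by
    intro y _
    have : y ∈ ⋃₀ β := by rw [hβc]; trivial
    obtain ⟨V, hV, hyV⟩ := this
    exact Set.mem_iUnion.2 ⟨⟨V, hV⟩, hyV⟩
  obtain ⟨ρ, hρ⟩ := PartitionOfUnity.exists_isSubordinate isClosed_univ
    (fun i : {V : Set Y // V ∈ β} => (i : Set Y)) (fun i => hβo i i.2) hcovY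
  -- the values
  set p : {V : Set Y // V ∈ β} → L := fun i =>
    if h : ∃ b : B, φ b ∈ (i : Set Y) then (F (h.choose : Z) : L) else 0 with hp
  set h : Y → L := fun y => ∑ᶠ i, ρ i y • p i with hh
  have hcont : Continuous h :=
    ρ.continuous_finsum_smul (fun i x _ => continuousAt_const)
  -- the barycentric average is `2ε₀`-close to `F b`
  have hball : ∀ b : B, h (φ b) ∈ Metric.ball ((F (b : Z)) : L) (2 * ε₀) := by
    intro b
    refine (convex_ball _ _).finsum_mem (fun i => ρ.nonneg i _)
      (ρ.sum_eq_one (Set.mem_univ _)) ?_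
    intro i hi
    have hyi : φ b ∈ (i : Set Y) :=
      hρ i (subset_tsupport _ (Function.mem_support.2 hi))
    have hex : ∃ b' : B, φ b' ∈ (i : Set Y) := ⟨b, hyi⟩
    have hpi : p i = (F (hex.choose : Z) : L) := by
      rw [hp]; exact dif_pos hex
    have h1 : F ((hex.choose : B) : Z) ∈ Metric.ball (ctr i) ε₀ :=
      hctr i hex.choose hex.choose_spec
    have h2 : F (b : Z) ∈ Metric.ball (ctr i) ε₀ := hctr i b hyi
    rw [Metric.mem_ball] at h1 h2 ⊢
    rw [Subtype.dist_eq] at h1 h2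
    rw [hpi]
    calc dist ((F ((hex.choose : B) : Z)) : L) ((F (b : Z)) : L)
        ≤ dist ((F ((hex.choose : B) : Z)) : L) ((ctr i : K) : L)
          + dist ((ctr i : K) : L) ((F (b : Z)) : L) := dist_triangle _ _ _
      _ < ε₀ + ε₀ := by
          rw [dist_comm ((ctr i : K) : L)]
          exact add_lt_add h1 h2
      _ = 2 * ε₀ := by ring
  -- locate the average near a center from `t`
  have hW' : ∀ b : B, ∃ j ∈ t,
      h (φ b) ∈ Metric.ball ((j : K) : L) (4 * ε j) ∧
      ((F (b : Z)) : L) ∈ Metric.ball ((j : K) : L) (4 * ε j) := by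
    intro b
    have : F (b : Z) ∈ ⋃ c ∈ t, Metric.ball c (ε c) := ht ⟨(b : Z), rfl⟩
    simp only [Set.mem_iUnion] at this
    obtain ⟨j, hj, hdist⟩ := this
    rw [Metric.mem_ball, Subtype.dist_eq] at hdist
    have hεj := hεpos j
    have hle := hε₀le j hj
    refine ⟨j, hj, ?_, ?_⟩
    · rw [Metric.mem_ball]
      have hb := hball b
      rw [Metric.mem_ball] at hb
      calc dist (h (φ b)) ((j : K) : L)
          ≤ dist (h (φ b)) ((F (b : Z)) : L)
            + dist ((F (b : Z)) : L) ((j : K) : L) := dist_triangle _ _ _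
        _ < 2 * ε₀ + ε j := add_lt_add hb hdist
        _ ≤ 4 * ε j := by linarith
    · rw [Metric.mem_ball]
      calc dist ((F (b : Z)) : L) ((j : K) : L) < ε j := hdist
        _ ≤ 4 * ε j := by linarith
  -- the average always lies in `W`
  have hWmem : ∀ y : Y, h y ∈ W := by
    intro y
    obtain ⟨b, rfl⟩ := hφ y
    obtain ⟨j, _, hsum, _⟩ := hW' b
    obtain ⟨hw, _⟩ := hkey j _ hsum
    exact hw
  refine ⟨⟨fun y => r ⟨h y, hWmem y⟩,
    r.continuous.comp (hcont.subtype_mk hWmem)⟩, ?_⟩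
  intro b
  obtain ⟨j, hj, hsum, hFb⟩ := hW' b
  refine ⟨U j, hUγ j, ?_, ?_⟩
  · obtain ⟨hw, hmem⟩ := hkey j _ hsum
    exact hmem
  · obtain ⟨hw, hmem⟩ := hkey j _ hFb
    have heq : r ⟨((F (b : Z)) : L), hw⟩ = F (b : Z) :=
      Subtype.ext (hr _ (F (b : Z)).2)
    rwa [heq] at hmem
end
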